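/- arXiv:1409.4659 — 2 statements merged into one kernel-verified Lean document; each statement's English description precedes it below -/
import Mathlib

section
/- For each α > 0 the set F_α = {n^{−α} : n ∈ ℕ} ∪ {0} ⊆ ℝ satisfies dim_LA F_α = 0, dim_LB F_α = dim_B F_α = 1/(1+α), and dim_A F_α = 1. -/
open Set Metric Filter Bornology MeasureTheory
open scoped ENNReal NNReal

/-- `coverNumber F δ` : the minimum number of closed `δ`-balls with centres in
`F` needed to cover `F` (`∞` if there is no finite such cover). -/
noncomputable def coverNumber {X : Type*} [MetricSpace X] (F : Set X) (δ : ℝ) : ℝ≥0∞ :=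
  ⨅ (t : Finset X) (_ : (t : Set X) ⊆ F) (_ : F ⊆ ⋃ x ∈ t, closedBall x δ),
    (t.card : ℝ≥0∞)

/-- `F` is equi-homogeneous: for every `δ₀ > 0` there are `M ≥ 1` and
`c₁, c₂ > 0` with
`sup_{x∈F} N(B_δ(x) ∩ F, ρ) ≤ M inf_{x∈F} N(B_{c₁δ}(x) ∩ F, c₂ρ)`
for all `0 < ρ < δ ≤ δ₀`. -/
def EquiHomogeneous {X : Type*} [MetricSpace X] (F : Set X) : Prop :=
  ∀ δ₀ : ℝ, 0 < δ₀ → ∃ M c₁ c₂ : ℝ, 1 ≤ M ∧ 0 < c₁ ∧ 0 < c₂ ∧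
    ∀ δ ρ : ℝ, 0 < ρ → ρ < δ → δ ≤ δ₀ →
      (⨆ x ∈ F, coverNumber (closedBall x δ ∩ F) ρ) ≤
        ENNReal.ofReal M * (⨅ x ∈ F, coverNumber (closedBall x (c₁ * δ) ∩ F) (c₂ * ρ))

/-- The Assouad dimension of `F`. -/
noncomputable def assouadDim {X : Type*} [MetricSpace X] (F : Set X) : ℝ :=
  sInf {s : ℝ | 0 ≤ s ∧ ∀ δ₀ : ℝ, 0 < δ₀ → ∃ C : ℝ, 0 < C ∧
    ∀ x ∈ F, ∀ δ ρ : ℝ, 0 < ρ → ρ < δ → δ ≤ δ₀ →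
      coverNumber (closedBall x δ ∩ F) ρ ≤ ENNReal.ofReal (C * (δ / ρ) ^ s)}

/-- The lower Assouad dimension of `F`. -/
noncomputable def lowerAssouadDim {X : Type*} [MetricSpace X] (F : Set X) : ℝ :=
  sSup {s : ℝ | 0 ≤ s ∧ ∀ δ₀ : ℝ, 0 < δ₀ → ∃ C : ℝ, 0 < C ∧
    ∀ x ∈ F, ∀ δ ρ : ℝ, 0 < ρ → ρ < δ → δ ≤ δ₀ →
      ENNReal.ofReal (C * (δ / ρ) ^ s) ≤ coverNumber (closedBall x δ ∩ F) ρ}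

/-- The upper box-counting dimension of `F`. -/
noncomputable def upperBoxDim {X : Type*} [MetricSpace X] (F : Set X) : ℝ :=
  Filter.limsup (fun δ : ℝ => Real.log (coverNumber F δ).toReal / -Real.log δ)
    (nhdsWithin 0 (Set.Ioi 0))

/-- The lower box-counting dimension of `F`. -/
noncomputable def lowerBoxDim {X : Type*} [MetricSpace X] (F : Set X) : ℝ :=
  Filter.liminf (fun δ : ℝ => Real.log (coverNumber F δ).toReal / -Real.log δ)
    (nhdsWithin 0 (Set.Ioi 0))

/-! The gap between consecutive points `n ^ (-α)` and `(n + 1) ^ (-α)` is of order `n ^ (-(1 + α))`.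
At scale `δ` the points with `n ≲ δ ^ (-1 / (1 + α))` are therefore `2δ`-separated, while the
remaining ones lie in an interval of length `≲ δ ^ (α / (1 + α))`; hence `N(F, δ)` is comparable
to `δ ^ (-1 / (1 + α))`. Around `0` at scale `δ = N ^ (-α)` and resolution `ρ ≍ N ^ (-(1 + α))`
one sees about `δ / ρ` separated points, which forces Assouad dimension `1`, the maximum for a
subset of `ℝ`. The isolated point `1` forces lower Assouad dimension `0`. -/

open Real Topology

section CoverNumber

variable {X : Type*} [MetricSpace X] {F : Set X} {δ : ℝ}

lemma coverNumber_le_card (t : Finset X) (htF : (t : Set X) ⊆ F)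
    (hFt : F ⊆ ⋃ x ∈ t, closedBall x δ) : coverNumber F δ ≤ t.card :=
  iInf_le_of_le t (iInf₂_le htF hFt)

lemma coverNumber_finset_le (t : Finset X) (hδ : 0 ≤ δ) : coverNumber (t : Set X) δ ≤ t.card :=
  coverNumber_le_card t subset_rfl fun _ hx => mem_biUnion hx (mem_closedBall_self hδ)

lemma coverNumber_le_one (hF : ∀ x ∈ F, ∀ y ∈ F, dist x y ≤ δ) : coverNumber F δ ≤ 1 := by
  rcases F.eq_empty_or_nonempty with rfl | ⟨x, hx⟩
  · exact (coverNumber_le_card (F := (∅ : Set X)) (δ := δ) ∅ (by simp) (by simp)).trans (by simp)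
  · simpa using coverNumber_le_card {x} (by simpa using hx)
      (fun y hy => by simpa using hF y hy x hx)

lemma coverNumber_union_le (F G : Set X) (δ : ℝ) :
    coverNumber (F ∪ G) δ ≤ coverNumber F δ + coverNumber G δ := by
  classical
  refine ENNReal.le_iInf_add_iInf fun t u => ENNReal.le_iInf_add_iInf fun htF huG =>
    ENNReal.le_iInf_add_iInf fun hFt hGu => ?_
  calc coverNumber (F ∪ G) δ ≤ (t ∪ u).card :=
        coverNumber_le_card _ (by push_cast; exact union_subset_union htF huG) fun x hx => by
          rcases hx with hx | hx
          · exact biUnion_subset_biUnion_left (by simp) (hFt hx)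
          · exact biUnion_subset_biUnion_left (by simp) (hGu hx)
    _ ≤ t.card + u.card := mod_cast Finset.card_union_le t u

/-- Distinct points of a `2δ`-separated family need distinct `δ`-balls. -/
lemma natCast_le_coverNumber_of_separated (f : ℕ → X) {N : ℕ} (hfF : ∀ k < N, f k ∈ F)
    (hsep : ∀ k l, k < l → l < N → 2 * δ < dist (f k) (f l)) :
    (N : ℝ≥0∞) ≤ coverNumber F δ := by
  have : Nonempty X := ⟨f 0⟩
  refine le_iInf fun t => le_iInf₂ fun _ hFt => ?_
  have hcentre : ∀ k ∈ Finset.range N, ∃ c ∈ t, dist (f k) c ≤ δ := fun k hk => by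
    simpa using hFt (hfF k (Finset.mem_range.1 hk))
  choose! c hct hdist using hcentre
  have hinj : InjOn c (Finset.range N : Set ℕ) := by
    have hclose : ∀ k ∈ Finset.range N, ∀ l ∈ Finset.range N, c k = c l →
        dist (f k) (f l) ≤ 2 * δ := fun k hk l hl hkl => by
      have := dist_triangle_right (f k) (f l) (c k)
      linarith [hdist k hk, hkl ▸ hdist l hl]
    intro k hk l hl hkl
    by_contra hne
    rcases Nat.lt_or_gt_of_ne hne with h | h
    · exact (hclose k hk l hl hkl).not_gt (hsep k l h (Finset.mem_range.1 hl))
    · exact (hclose l hl k hk hkl.symm).not_gt (hsep l k h (Finset.mem_range.1 hk))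
  simpa using Finset.card_le_card_of_injOn c hct hinj

lemma one_le_coverNumber (hF : F.Nonempty) : 1 ≤ coverNumber F δ := by
  obtain ⟨x, hx⟩ := hF
  simpa using natCast_le_coverNumber_of_separated (fun _ => x) (N := 1) (fun _ _ => hx)
    (fun _ _ _ _ => by omega)

end CoverNumber

section Interval

variable {F : Set ℝ} {δ : ℝ}

lemma coverNumber_le_of_subset_Icc_add_mul (hδ : 0 ≤ δ) (m : ℕ) {a : ℝ}
    (hF : F ⊆ Icc a (a + m * δ)) : coverNumber F δ ≤ m + 1 := by
  induction m generalizing a F with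
  | zero =>
    simp only [CharP.cast_eq_zero, zero_mul, add_zero, Icc_self, zero_add] at hF ⊢
    exact coverNumber_le_one fun x hx y hy => by rw [hF hx, hF hy, dist_self]; exact hδ
  | succ m ih =>
    have hsplit : F = (F ∩ Icc a (a + δ)) ∪ (F ∩ Icc (a + δ) (a + δ + m * δ)) := by
      refine (Subset.antisymm (fun x hx => ?_) (union_subset inter_subset_left inter_subset_left))
      obtain ⟨hax, hxb⟩ := hF hx
      rcases le_total x (a + δ) with h | h
      · exact Or.inl ⟨hx, hax, h⟩
      · exact Or.inr ⟨hx, h, by push_cast at hxb; linarith⟩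
    have hfirst : coverNumber (F ∩ Icc a (a + δ)) δ ≤ 1 := coverNumber_le_one
      fun x hx y hy => by simpa using Real.dist_le_of_mem_Icc hx.2 hy.2
    rw [hsplit]
    calc _ ≤ _ := coverNumber_union_le _ _ δ
      _ ≤ 1 + (m + 1) := add_le_add hfirst (ih inter_subset_right)
      _ = (m + 1 : ℕ) + 1 := by push_cast; ring

lemma coverNumber_le_of_subset_Icc (hδ : 0 < δ) {a b : ℝ} (hab : a ≤ b) (hF : F ⊆ Icc a b) :
    coverNumber F δ ≤ ENNReal.ofReal ((b - a) / δ + 2) := by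
  set m := ⌈(b - a) / δ⌉₊
  have hratio : 0 ≤ (b - a) / δ := div_nonneg (by linarith) hδ.le
  have hbm : b ≤ a + m * δ := by
    have := (div_le_iff₀ hδ).1 (Nat.le_ceil ((b - a) / δ))
    linarith
  calc coverNumber F δ ≤ m + 1 :=
        coverNumber_le_of_subset_Icc_add_mul hδ.le m (hF.trans (Icc_subset_Icc_right hbm))
    _ = ENNReal.ofReal (m + 1) := by rw [ENNReal.ofReal_add (by positivity) zero_le_one]; simp
    _ ≤ ENNReal.ofReal ((b - a) / δ + 2) :=
        ENNReal.ofReal_le_ofReal (by linarith [Nat.ceil_lt_add_one hratio])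

end Interval

section InversePowers

variable {α : ℝ}

/-- The mean value theorem for `t ↦ t ^ (-α)` on `[x, y]`, whose derivative there is at most
`-α L ^ (-(α + 1))`. -/
lemma mul_rpow_neg_le_rpow_neg_sub_rpow_neg (hα : 0 < α) {x y L : ℝ} (hx : 0 < x)
    (hxy : x + 1 ≤ y) (hyL : y ≤ L) : α * L ^ (-(α + 1)) ≤ x ^ (-α) - y ^ (-α) := by
  have hpos : ∀ t ∈ Icc x y, t ≠ 0 := fun t ht => (hx.trans_le ht.1).ne'
  have hderiv : ∀ t ∈ interior (Icc x y),
      deriv (fun t : ℝ => t ^ (-α)) t ≤ -α * L ^ (-(α + 1)) := by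
    intro t ht
    rw [interior_Icc] at ht
    have ht0 : 0 < t := hx.trans ht.1
    rw [Real.deriv_rpow_const, show -α - 1 = -(α + 1) by ring, neg_mul, neg_mul, neg_le_neg_iff]
    exact mul_le_mul_of_nonneg_left
      (Real.rpow_le_rpow_of_nonpos ht0 (ht.2.le.trans hyL) (by linarith)) hα.le
  have hmvt := (convex_Icc x y).image_sub_le_mul_sub_of_deriv_le
    (fun t ht => (Real.continuousAt_rpow_const t _ (Or.inl (hpos t ht))).continuousWithinAt)
    (fun t ht => (Real.hasDerivAt_rpow_const (Or.inl (hpos t (interior_subset ht))))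
      |>.differentiableAt.differentiableWithinAt)
    hderiv x (left_mem_Icc.2 (by linarith)) y (right_mem_Icc.2 (by linarith)) (by linarith)
  have hL : 0 ≤ α * L ^ (-(α + 1)) := by
    have : 0 < L := by linarith
    positivity
  nlinarith

lemma natCast_le_coverNumber_of_rpow_neg_mem (hα : 0 < α) {G : Set ℝ} {ρ : ℝ} {a N : ℕ}
    (ha : 1 ≤ a) (hG : ∀ k < N, ((a + k : ℕ) : ℝ) ^ (-α) ∈ G)
    (hρ : 2 * ρ < α * ((a + N : ℕ) : ℝ) ^ (-(α + 1))) : (N : ℝ≥0∞) ≤ coverNumber G ρ := by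
  refine natCast_le_coverNumber_of_separated _ hG fun k l hkl hlN => ?_
  have hgap := mul_rpow_neg_le_rpow_neg_sub_rpow_neg hα (x := ((a + k : ℕ) : ℝ))
    (y := ((a + l : ℕ) : ℝ)) (L := ((a + N : ℕ) : ℝ)) (by positivity)
    (by push_cast; exact_mod_cast (by omega : a + k + 1 ≤ a + l))
    (by exact_mod_cast (by omega : a + l ≤ a + N))
  have hpos : 0 < α * ((a + N : ℕ) : ℝ) ^ (-(α + 1)) := by positivity
  rw [Real.dist_eq, abs_of_pos (by linarith)]
  linarith

def inversePowers (α : ℝ) : Set ℝ := insert 0 {x : ℝ | ∃ n : ℕ, 1 ≤ n ∧ x = (n : ℝ) ^ (-α)}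

lemma zero_mem_inversePowers : (0 : ℝ) ∈ inversePowers α := mem_insert _ _

lemma rpow_neg_mem_inversePowers {n : ℕ} (hn : 1 ≤ n) : (n : ℝ) ^ (-α) ∈ inversePowers α :=
  mem_insert_of_mem _ ⟨n, hn, rfl⟩

end InversePowers

section BoxDimension

lemma tendsto_log_coverNumber_div_neg_log {X : Type*} [MetricSpace X] {F : Set X} {θ c C : ℝ}
    (hc : 0 < c) (hF : ∀ᶠ δ in 𝓝[>] 0, ENNReal.ofReal (c * δ ^ (-θ)) ≤ coverNumber F δ ∧
      coverNumber F δ ≤ ENNReal.ofReal (C * δ ^ (-θ))) :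
    Tendsto (fun δ => log (coverNumber F δ).toReal / -log δ) (𝓝[>] 0) (𝓝 θ) := by
  have hneglog : Tendsto (fun δ : ℝ => -log δ) (𝓝[>] 0) atTop :=
    tendsto_neg_atBot_atTop.comp tendsto_log_nhdsGT_zero
  have hlim : ∀ b : ℝ, Tendsto (fun δ => b / -log δ + θ) (𝓝[>] 0) (𝓝 θ) := fun b => by
    simpa using (tendsto_const_nhds.div_atTop hneglog).add_const θ
  have hsandwich : ∀ᶠ δ in 𝓝[>] 0,
      log c / -log δ + θ ≤ log (coverNumber F δ).toReal / -log δ ∧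
        log (coverNumber F δ).toReal / -log δ ≤ log C / -log δ + θ := by
    filter_upwards [hF, Ioo_mem_nhdsGT one_pos] with δ ⟨hlow, hup⟩ ⟨hδ, hδ1⟩
    have hD : 0 < δ ^ (-θ) := by positivity
    have hlogδ : 0 < -log δ := neg_pos.2 (log_neg hδ hδ1)
    have hCD : 0 < C * δ ^ (-θ) :=
      ENNReal.ofReal_pos.1 ((ENNReal.ofReal_pos.2 (mul_pos hc hD)).trans_le (hlow.trans hup))
    have hC : 0 < C := (mul_pos_iff_of_pos_right hD).1 hCD
    have hr_low : c * δ ^ (-θ) ≤ (coverNumber F δ).toReal :=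
      (ENNReal.ofReal_le_iff_le_toReal (ne_top_of_le_ne_top ENNReal.ofReal_ne_top hup)).1 hlow
    have hr_up : (coverNumber F δ).toReal ≤ C * δ ^ (-θ) :=
      ENNReal.toReal_le_of_le_ofReal hCD.le hup
    have hlog_eq : ∀ b : ℝ, 0 < b → log (b * δ ^ (-θ)) / -log δ = log b / -log δ + θ := by
      intro b hb
      have hlogδ0 : log δ ≠ 0 := (log_neg hδ hδ1).ne
      rw [log_mul hb.ne' hD.ne', log_rpow hδ]
      field_simp
      ring
    rw [← hlog_eq c hc, ← hlog_eq C hC]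
    exact ⟨div_le_div_of_nonneg_right (log_le_log (mul_pos hc hD) hr_low) hlogδ.le,
      div_le_div_of_nonneg_right (log_le_log ((mul_pos hc hD).trans_le hr_low) hr_up) hlogδ.le⟩
  exact tendsto_of_tendsto_of_tendsto_of_le_of_le' (hlim _) (hlim _)
    (hsandwich.mono fun _ h => h.1) (hsandwich.mono fun _ h => h.2)

variable {α : ℝ}

lemma coverNumber_inversePowers_le (hα : 0 < α) {δ : ℝ} (hδ : 0 < δ) {N : ℕ} (hN : 1 ≤ N) :
    coverNumber (inversePowers α) δ ≤ ENNReal.ofReal (N + (N : ℝ) ^ (-α) / δ + 2) := by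
  classical
  set head : Finset ℝ := (Finset.Ico 1 N).image fun n : ℕ => (n : ℝ) ^ (-α)
  set tail : Set ℝ := inversePowers α ∩ Icc 0 ((N : ℝ) ^ (-α))
  have hN0 : (0 : ℝ) < N := by exact_mod_cast hN
  have hsplit : inversePowers α = (head : Set ℝ) ∪ tail := by
    refine Subset.antisymm ?_ (union_subset ?_ inter_subset_left)
    · rintro x (rfl | ⟨n, hn, rfl⟩)
      · exact Or.inr ⟨zero_mem_inversePowers, le_rfl, by positivity⟩
      · rcases lt_or_ge n N with h | h
        · exact Or.inl (by simpa [head] using ⟨n, ⟨hn, h⟩, rfl⟩)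
        · exact Or.inr ⟨rpow_neg_mem_inversePowers hn, by positivity,
            Real.rpow_le_rpow_of_nonpos hN0 (by exact_mod_cast h) (by linarith)⟩
    · intro x hx
      obtain ⟨n, ⟨hn, -⟩, rfl⟩ := by simpa [head] using hx
      exact rpow_neg_mem_inversePowers hn
  have hhead : coverNumber (head : Set ℝ) δ ≤ N :=
    (coverNumber_finset_le head hδ.le).trans (mod_cast Finset.card_image_le.trans (by simp))
  have htail := coverNumber_le_of_subset_Icc hδ (by positivity) (inter_subset_right : tail ⊆ _)
  rw [hsplit]
  calc _ ≤ _ := coverNumber_union_le _ _ δ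
    _ ≤ N + ENNReal.ofReal (((N : ℝ) ^ (-α) - 0) / δ + 2) := add_le_add hhead htail
    _ = ENNReal.ofReal (N + (N : ℝ) ^ (-α) / δ + 2) := by
      rw [sub_zero, ← ENNReal.ofReal_natCast, ← ENNReal.ofReal_add (by positivity) (by positivity),
        add_assoc]

lemma coverNumber_inversePowers_le_rpow (hα : 0 < α) {δ : ℝ} (hδ : 0 < δ) (hδ1 : δ ≤ 1) :
    coverNumber (inversePowers α) δ ≤ ENNReal.ofReal (5 * δ ^ (-(1 / (1 + α)))) := by
  set θ := 1 / (1 + α)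
  set D := δ ^ (-θ)
  have hD : 1 ≤ D := Real.one_le_rpow_of_pos_of_le_one_of_nonpos hδ hδ1 (by simp [θ]; positivity)
  set N := ⌈D⌉₊
  have hN : 1 ≤ N := Nat.one_le_ceil_iff.2 (by linarith)
  have hND : (N : ℝ) ≤ D + 1 := (Nat.ceil_lt_add_one (by linarith)).le
  -- `θ α = 1 - θ`, so `D ^ (-α) = δ ^ (1 - θ) = D δ`
  have htail : (N : ℝ) ^ (-α) / δ ≤ D := by
    rw [div_le_iff₀ hδ]
    calc (N : ℝ) ^ (-α) ≤ D ^ (-α) :=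
          Real.rpow_le_rpow_of_nonpos (by linarith) (Nat.le_ceil D) (by linarith)
      _ = D * δ := by
        rw [← Real.rpow_mul hδ.le, ← Real.rpow_add_one hδ.ne']
        congr 1
        simp only [θ]
        field_simp
        ring
  refine (coverNumber_inversePowers_le hα hδ hN).trans (ENNReal.ofReal_le_ofReal ?_)
  linarith

lemma ofReal_le_coverNumber_inversePowers (hα : 0 < α) {δ E : ℝ} (hδ : 0 < δ) (hE : 2 ≤ E)
    (hEδ : 4 * δ * (2 * E) ^ (α + 1) ≤ α) :
    ENNReal.ofReal (E / 2) ≤ coverNumber (inversePowers α) δ := by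
  set M := ⌊E⌋₊
  have hME : E / 2 ≤ M := by linarith [Nat.lt_floor_add_one E]
  have hM2E : ((1 + M : ℕ) : ℝ) ≤ 2 * E := by
    push_cast
    linarith [Nat.floor_le (by linarith : 0 ≤ E)]
  have hsep : 2 * δ < α * ((1 + M : ℕ) : ℝ) ^ (-(α + 1)) := by
    have hL : 0 < ((1 + M : ℕ) : ℝ) := by positivity
    rw [Real.rpow_neg hL.le, ← div_eq_mul_inv, lt_div_iff₀ (by positivity)]
    have : 0 < δ * (2 * E) ^ (α + 1) := by positivity
    calc 2 * δ * ((1 + M : ℕ) : ℝ) ^ (α + 1) ≤ 2 * δ * (2 * E) ^ (α + 1) := by gcongr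
      _ < 4 * δ * (2 * E) ^ (α + 1) := by linarith
      _ ≤ α := hEδ
  calc ENNReal.ofReal (E / 2) ≤ M := by
        rw [← ENNReal.ofReal_natCast]
        exact ENNReal.ofReal_le_ofReal hME
    _ ≤ coverNumber _ δ := natCast_le_coverNumber_of_rpow_neg_mem hα le_rfl
        (fun _ _ => rpow_neg_mem_inversePowers (by omega)) hsep

lemma coverNumber_inversePowers_bounds (hα : 0 < α) :
    ∃ c > 0, ∀ᶠ δ in 𝓝[>] 0,
      ENNReal.ofReal (c * δ ^ (-(1 / (1 + α)))) ≤ coverNumber (inversePowers α) δ ∧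
        coverNumber (inversePowers α) δ ≤ ENNReal.ofReal (5 * δ ^ (-(1 / (1 + α)))) := by
  set θ := 1 / (1 + α)
  have hθ : 0 < θ := by positivity
  set c := (α / 4) ^ θ / 2
  refine ⟨c / 2, by positivity, ?_⟩
  have hlarge : ∀ᶠ δ in 𝓝[>] 0, 2 ≤ c * δ ^ (-θ) :=
    ((tendsto_rpow_neg_nhdsGT_zero (by linarith)).const_mul_atTop
      (by positivity)).eventually_ge_atTop 2
  filter_upwards [hlarge, Ioo_mem_nhdsGT one_pos] with δ hE ⟨hδ, hδ1⟩
  refine ⟨?_, coverNumber_inversePowers_le_rpow hα hδ hδ1.le⟩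
  -- `c` is chosen so that `4 δ (2 c δ ^ (-θ)) ^ (α + 1) = α`
  have h2E : 2 * (c * δ ^ (-θ)) = (α / (4 * δ)) ^ θ := by
    rw [show α / (4 * δ) = α / 4 / δ by ring, Real.div_rpow (by positivity) hδ.le,
      Real.rpow_neg hδ.le]
    ring
  rw [show c / 2 * δ ^ (-θ) = c * δ ^ (-θ) / 2 by ring]
  refine ofReal_le_coverNumber_inversePowers hα hδ hE (le_of_eq ?_)
  rw [h2E, ← Real.rpow_mul (by positivity), show θ * (α + 1) = 1 by simp only [θ]; field_simp; ring,
    Real.rpow_one]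
  field_simp

end BoxDimension

section Assouad

variable {X : Type*} [MetricSpace X]

/-- The exponents `s` in the infimum defining `assouadDim F`. -/
def IsAssouadExponent (F : Set X) (s : ℝ) : Prop :=
  0 ≤ s ∧ ∀ δ₀ : ℝ, 0 < δ₀ → ∃ C : ℝ, 0 < C ∧
    ∀ x ∈ F, ∀ δ ρ : ℝ, 0 < ρ → ρ < δ → δ ≤ δ₀ →
      coverNumber (closedBall x δ ∩ F) ρ ≤ ENNReal.ofReal (C * (δ / ρ) ^ s)

/-- The exponents `s` in the supremum defining `lowerAssouadDim F`. -/
def IsLowerAssouadExponent (F : Set X) (s : ℝ) : Prop :=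
  0 ≤ s ∧ ∀ δ₀ : ℝ, 0 < δ₀ → ∃ C : ℝ, 0 < C ∧
    ∀ x ∈ F, ∀ δ ρ : ℝ, 0 < ρ → ρ < δ → δ ≤ δ₀ →
      ENNReal.ofReal (C * (δ / ρ) ^ s) ≤ coverNumber (closedBall x δ ∩ F) ρ

lemma isLowerAssouadExponent_zero (F : Set X) : IsLowerAssouadExponent F 0 :=
  ⟨le_rfl, fun _ _ => ⟨1, one_pos, fun x hx _ _ hρ hρδ _ => by
    rw [Real.rpow_zero, mul_one, ENNReal.ofReal_one]
    exact one_le_coverNumber ⟨x, mem_closedBall_self (hρ.trans hρδ).le, hx⟩⟩⟩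

lemma IsLowerAssouadExponent.eq_zero_of_isolated {F : Set X} {x : X} {r s : ℝ} (hx : x ∈ F)
    (hr : 0 < r) (hiso : closedBall x r ∩ F ⊆ {x}) (hs : IsLowerAssouadExponent F s) : s = 0 := by
  obtain ⟨hs0, hbound⟩ := hs
  by_contra hne
  have hspos : 0 < s := lt_of_le_of_ne hs0 (Ne.symm hne)
  obtain ⟨C, hC, hC_bound⟩ := hbound r hr
  obtain ⟨R, hR1, hCR⟩ := ((eventually_gt_atTop 1).and
    (((tendsto_rpow_atTop hspos).const_mul_atTop hC).eventually_gt_atTop 1)).exists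
  have hlow := hC_bound x hx r (r / R) (by positivity) (div_lt_self hr hR1) le_rfl
  rw [div_div_cancel₀ hr.ne'] at hlow
  have hone : coverNumber (closedBall x r ∩ F) (r / R) ≤ 1 := coverNumber_le_one
    fun y hy z hz => by
      rw [mem_singleton_iff.1 (hiso hy), mem_singleton_iff.1 (hiso hz), dist_self]
      positivity
  have := hlow.trans hone
  rw [ENNReal.ofReal_le_one] at this
  linarith

lemma lowerAssouadDim_eq_zero_of_isolated {F : Set X} {x : X} {r : ℝ} (hx : x ∈ F) (hr : 0 < r)
    (hiso : closedBall x r ∩ F ⊆ {x}) : lowerAssouadDim F = 0 := by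
  have hexp : {s | IsLowerAssouadExponent F s} = {0} := eq_singleton_iff_unique_mem.2
    ⟨isLowerAssouadExponent_zero F, fun _ hs => hs.eq_zero_of_isolated hx hr hiso⟩
  change sSup {s | IsLowerAssouadExponent F s} = 0
  rw [hexp, csSup_singleton]

lemma isAssouadExponent_one (F : Set ℝ) : IsAssouadExponent F 1 := by
  refine ⟨zero_le_one, fun _ _ => ⟨4, by norm_num, fun x _ δ ρ hρ hρδ _ => ?_⟩⟩
  have hsub : closedBall x δ ∩ F ⊆ Icc (x - δ) (x + δ) :=
    Real.closedBall_eq_Icc ▸ inter_subset_left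
  refine (coverNumber_le_of_subset_Icc hρ (by linarith) hsub).trans (ENNReal.ofReal_le_ofReal ?_)
  have : 1 ≤ δ / ρ := (one_le_div hρ).2 hρδ.le
  rw [Real.rpow_one, show (x + δ - (x - δ)) / ρ = 2 * (δ / ρ) by ring]
  linarith

variable {α : ℝ}

lemma natCast_le_coverNumber_closedBall_zero_inversePowers (hα : 0 < α) {N : ℕ} (hN : 1 ≤ N) :
    (N : ℝ≥0∞) ≤ coverNumber (closedBall 0 ((N : ℝ) ^ (-α)) ∩ inversePowers α)
      (α * ((N + N : ℕ) : ℝ) ^ (-(α + 1)) / 4) := by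
  have hN0 : (0 : ℝ) < N := by exact_mod_cast hN
  have hmem : ∀ k < N, ((N + k : ℕ) : ℝ) ^ (-α) ∈ closedBall 0 ((N : ℝ) ^ (-α)) ∩ inversePowers α :=
    fun k _ => ⟨by
      rw [mem_closedBall, dist_zero_right, Real.norm_eq_abs, abs_of_pos (by positivity)]
      exact Real.rpow_le_rpow_of_nonpos hN0 (by exact_mod_cast (by omega : N ≤ N + k))
        (by linarith), rpow_neg_mem_inversePowers (by omega)⟩
  have hgap : 0 < α * ((N + N : ℕ) : ℝ) ^ (-(α + 1)) := by positivity
  exact natCast_le_coverNumber_of_rpow_neg_mem hα hN hmem (by linarith)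

lemma IsAssouadExponent.one_le (hα : 0 < α) {s : ℝ} (hs : IsAssouadExponent (inversePowers α) s) :
    1 ≤ s := by
  obtain ⟨hs0, hbound⟩ := hs
  obtain ⟨C, hC, hC_bound⟩ := hbound 1 one_pos
  by_contra! hs1
  set K := 4 * 2 ^ (α + 1) / α
  have hK : 0 < K := by positivity
  have hcount : ∀ N : ℕ, 1 ≤ N → 1 < K * N → (N : ℝ) ≤ C * (K * N) ^ s := by
    intro N hN hKN
    have hN0 : (0 : ℝ) < N := by exact_mod_cast hN
    set δ := (N : ℝ) ^ (-α)
    set ρ := α * ((N + N : ℕ) : ℝ) ^ (-(α + 1)) / 4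
    have hρ : 0 < ρ := by positivity
    have hratio : δ / ρ = K * N := by
      have hpow : (N : ℝ) ^ (-α) * (N : ℝ) ^ (α + 1) = N := by
        rw [← Real.rpow_add hN0, neg_add_cancel_left, Real.rpow_one]
      calc δ / ρ = K * ((N : ℝ) ^ (-α) * (N : ℝ) ^ (α + 1)) := by
            simp only [δ, ρ, K]
            rw [show ((N + N : ℕ) : ℝ) = 2 * N by push_cast; ring,
              Real.rpow_neg (by positivity : (0 : ℝ) ≤ 2 * N) (α + 1),
              Real.mul_rpow (by norm_num) hN0.le]
            field_simp
        _ = K * N := by rw [hpow]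
    have hρδ : ρ < δ := (one_lt_div hρ).1 (hratio ▸ hKN)
    have hδ1 : δ ≤ 1 := Real.rpow_le_one_of_one_le_of_nonpos (by exact_mod_cast hN) (by linarith)
    have := (natCast_le_coverNumber_closedBall_zero_inversePowers hα hN).trans
      (hC_bound 0 zero_mem_inversePowers δ ρ hρ hρδ hδ1)
    rwa [← ENNReal.ofReal_natCast, ENNReal.ofReal_le_ofReal_iff (by positivity), hratio] at this
  have hgrow : Tendsto (fun N : ℕ => (N : ℝ) ^ (1 - s)) atTop atTop :=
    (tendsto_rpow_atTop (by linarith)).comp tendsto_natCast_atTop_atTop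
  have hKN : Tendsto (fun N : ℕ => K * N) atTop atTop :=
    tendsto_natCast_atTop_atTop.const_mul_atTop hK
  obtain ⟨N, hN1, hKN1, hbig⟩ := ((eventually_ge_atTop 1).and ((hKN.eventually_gt_atTop 1).and
    (hgrow.eventually_gt_atTop (C * K ^ s)))).exists
  have hN0 : (0 : ℝ) < N := by exact_mod_cast hN1
  have hNs : 0 < (N : ℝ) ^ s := by positivity
  have hle : (N : ℝ) ^ (1 - s) * N ^ s ≤ C * K ^ s * N ^ s := by
    rw [← Real.rpow_add hN0, sub_add_cancel, Real.rpow_one, mul_assoc, ← Real.mul_rpow hK.le hN0.le]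
    exact hcount N hN1 hKN1
  exact (le_of_mul_le_mul_right hle hNs).not_gt hbig

lemma assouadDim_inversePowers (hα : 0 < α) : assouadDim (inversePowers α) = 1 :=
  le_antisymm (csInf_le ⟨0, fun _ hs => hs.1⟩ (isAssouadExponent_one _))
    (le_csInf ⟨1, isAssouadExponent_one _⟩ fun _ hs => IsAssouadExponent.one_le hα hs)

lemma one_mem_inversePowers : (1 : ℝ) ∈ inversePowers α := by
  simpa using rpow_neg_mem_inversePowers (α := α) le_rfl

lemma exists_closedBall_one_inter_inversePowers_subset (hα : 0 < α) :
    ∃ r > 0, closedBall 1 r ∩ inversePowers α ⊆ {1} := by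
  have h2 : (2 : ℝ) ^ (-α) < 1 := Real.rpow_lt_one_of_one_lt_of_neg (by norm_num) (by linarith)
  have h2pos : (0 : ℝ) < 2 ^ (-α) := by positivity
  refine ⟨(1 - 2 ^ (-α)) / 2, by linarith, ?_⟩
  rintro y ⟨hy, rfl | ⟨n, hn, rfl⟩⟩
  · rw [mem_closedBall, Real.dist_eq] at hy
    norm_num at hy
    linarith
  · rcases hn.eq_or_lt with rfl | hn2
    · simp
    · have hle : (n : ℝ) ^ (-α) ≤ 2 ^ (-α) :=
        Real.rpow_le_rpow_of_nonpos two_pos (by exact_mod_cast hn2) (by linarith)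
      have hpos : (0 : ℝ) < (n : ℝ) ^ (-α) := by positivity
      rw [mem_closedBall, Real.dist_eq, abs_of_neg (by linarith)] at hy
      linarith

end Assouad

/-- For each `α > 0`, `F_α = {n^{-α} : n ∈ ℕ} ∪ {0}` satisfies
`dim_LA F_α = 0`, `dim_LB F_α = dim_B F_α = 1/(1+α)` and `dim_A F_α = 1`. -/
theorem dims_of_inverse_powers (α : ℝ) (hα : 0 < α) (Fα : Set ℝ)
    (hFα : Fα = insert (0 : ℝ) {x : ℝ | ∃ n : ℕ, 1 ≤ n ∧ x = (n : ℝ) ^ (-α)}) :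
    lowerAssouadDim Fα = 0 ∧
    lowerBoxDim Fα = 1 / (1 + α) ∧
    upperBoxDim Fα = 1 / (1 + α) ∧
    assouadDim Fα = 1 := by
  subst hFα
  obtain ⟨c, hc, hbounds⟩ := coverNumber_inversePowers_bounds hα
  have hbox := tendsto_log_coverNumber_div_neg_log hc hbounds
  obtain ⟨r, hr, hiso⟩ := exists_closedBall_one_inter_inversePowers_subset hα
  exact ⟨lowerAssouadDim_eq_zero_of_isolated one_mem_inversePowers hr hiso, hbox.liminf_eq,
    hbox.limsup_eq, assouadDim_inversePowers hα⟩
end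

section
/- Let {F^k} be the pullback attractor of a non-autonomous iterated function system of similarities satisfying the generalised Moran open-set condition, with inf{σ_i : i ∈ ℕ} = σ* > 0, and suppose there exists s > 0 with Σ_{i∈I_k} σ_i^s = 1 for all k ∈ ℕ. Then there exist constants κ₁, κ₂ > 0, independent of k and δ, such that κ₁ δ^{−s} ≤ card(J^k_δ) ≤ κ₂ δ^{−s} for every k ∈ ℕ₀ and every δ with 0 < δ ≤ η. -/
open Set Metric Filter Bornology MeasureTheory
open scoped ENNReal NNReal

/-- A non-autonomous iterated function system: contractions `f i` with ratios
`σ i ∈ (0,1)` and finite nonempty index sets `I k ⊆ ℕ` for `k ≥ 1`. -/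
structure NAIFS (E : Type*) [MetricSpace E] where
  f : ℕ → E → E
  σ : ℕ → ℝ
  σ_pos : ∀ i, 0 < σ i
  σ_lt_one : ∀ i, σ i < 1
  contract : ∀ i x y, dist (f i x) (f i y) ≤ σ i * dist x y
  I : ℕ → Finset ℕ
  I_nonempty : ∀ k, 1 ≤ k → (I k).Nonempty

variable {E : Type*} [MetricSpace E]

/-- `S^k(B) = ⋃_{i ∈ I_{k+1}} f_i(B)`. -/
def Sstep (sys : NAIFS E) (k : ℕ) (B : Set E) : Set E :=
  ⋃ i ∈ sys.I (k + 1), sys.f i '' B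

/-- `SiterN sys k n B = S^{k, k+n}(B) = S^k ∘ ⋯ ∘ S^{k+n-1} (B)`. -/
def SiterN (sys : NAIFS E) : ℕ → ℕ → Set E → Set E
  | _, 0, B => B
  | k, n + 1, B => Sstep sys k (SiterN sys (k + 1) n B)

/-- Hausdorff semi-distance `ρ_H(A,B) = sup_{x ∈ A} inf_{y ∈ B} d(x,y)`. -/
noncomputable def semidist (A B : Set E) : ℝ≥0∞ :=
  ⨆ x ∈ A, EMetric.infEdist x B

/-- `{F^k}` is a pullback attractor: each `F^k` compact, uniformly bounded,
invariant `F^k = S^k(F^{k+1})`, and `ρ_H(S^{k,l}(B), F^k) → 0` as `l → ∞`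
for every bounded `B`. -/
def IsPullbackAttractor (sys : NAIFS E) (F : ℕ → Set E) : Prop :=
  (∀ k, IsCompact (F k)) ∧
  IsBounded (⋃ k, F k) ∧
  (∀ k, F k = Sstep sys k (F (k + 1))) ∧
  (∀ B : Set E, IsBounded B → ∀ k,
    Tendsto (fun l => semidist (SiterN sys k (l - k) B) (F k)) atTop (nhds 0))

/-- The generalised Moran open-set condition: uniformly bounded nonempty open
sets `U^k` with `S^k(U^{k+1}) ⊆ U^k`, `f_i(U^k) ∩ f_j(U^k) = ∅` for distinct
`i, j ∈ I_k`, and `λ(U^k) ≥ ε₀ > 0`. -/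
def GenMoranOSC {d : ℕ} (sys : NAIFS (EuclideanSpace ℝ (Fin d)))
    (U : ℕ → Set (EuclideanSpace ℝ (Fin d))) (ε₀ : ℝ) : Prop :=
  (∀ k, (U k).Nonempty) ∧
  (∀ k, IsOpen (U k)) ∧
  IsBounded (⋃ k, U k) ∧
  (∀ k, Sstep sys k (U (k + 1)) ⊆ U k) ∧
  (∀ k, 1 ≤ k → ∀ i ∈ sys.I k, ∀ j ∈ sys.I k, i ≠ j →
    sys.f i '' U k ∩ sys.f j '' U k = ∅) ∧
  0 < ε₀ ∧
  (∀ k, ENNReal.ofReal ε₀ ≤ volume (U k))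

/-- `wordSet sys k n` is `J^{k,k+n} = I_{k+1} × ⋯ × I_{k+n}`, as a finite set
of words (lists). -/
def wordSet (sys : NAIFS E) : ℕ → ℕ → Finset (List ℕ)
  | _, 0 => {([] : List ℕ)}
  | k, n + 1 => Finset.image (fun p : ℕ × List ℕ => p.1 :: p.2)
      (sys.I (k + 1) ×ˢ wordSet sys (k + 1) n)

/-- `σ_α = σ_{i_1} ⋯ σ_{i_n}` for a word `α = (i_1, …, i_n)`. -/
noncomputable def sigmaWord (sys : NAIFS E) (α : List ℕ) : ℝ :=
  (α.map sys.σ).prod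

/-- `f_α = f_{i_1} ∘ ⋯ ∘ f_{i_n}` for a word `α = (i_1, …, i_n)`. -/
def mapWord (sys : NAIFS E) (α : List ℕ) : E → E :=
  α.foldr (fun i g => sys.f i ∘ g) id

/-- `J^k_δ = {α ∈ J^k : σ_α η < δ ≤ σ_{α'} η}`, where `α'` is the truncation
of `α` (with `σ_{α'} = 1` when `α` has length 1). -/
def Jset (sys : NAIFS E) (η : ℝ) (k : ℕ) (δ : ℝ) : Set (List ℕ) :=
  {α | (∃ n : ℕ, 1 ≤ n ∧ α ∈ wordSet sys k n) ∧
    sigmaWord sys α * η < δ ∧ δ ≤ sigmaWord sys α.dropLast * η}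

/-!
No word of `J^k_δ` is a proper prefix of another, and every word of length `N` has a prefix in
`J^k_δ` once `c ^ N η < δ`, where `c < 1` bounds all ratios uniformly (each `I_k` has at least
two letters, so `σ_i ^ s ≤ 1 - σ* ^ s`). Since `∑_{i ∈ I_k} σ_i ^ s = 1`, replacing a word by all
its extensions of a given length preserves the total weight `σ_α ^ s`; hence
`∑_{α ∈ J^k_δ} σ_α ^ s = 1`. Each term satisfies `σ* δ ≤ σ_α η < δ`, which bounds the
cardinality of `J^k_δ` from both sides.
-/

section Words

variable (sys : NAIFS E)

lemma sigmaWord_cons (i : ℕ) (α : List ℕ) :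
    sigmaWord sys (i :: α) = sys.σ i * sigmaWord sys α := by
  simp [sigmaWord]

lemma sigmaWord_append (α β : List ℕ) :
    sigmaWord sys (α ++ β) = sigmaWord sys α * sigmaWord sys β := by
  simp [sigmaWord]

lemma sigmaWord_pos (α : List ℕ) : 0 < sigmaWord sys α :=
  List.prod_pos (by simpa using fun i _ => sys.σ_pos i)

lemma sigmaWord_le_one (α : List ℕ) : sigmaWord sys α ≤ 1 := by
  induction α with
  | nil => simp [sigmaWord]
  | cons i α ih =>
    rw [sigmaWord_cons]
    exact mul_le_one₀ (sys.σ_lt_one i).le (sigmaWord_pos sys α).le ih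

lemma sigmaWord_le_of_prefix {α β : List ℕ} (h : α <+: β) :
    sigmaWord sys β ≤ sigmaWord sys α := by
  obtain ⟨ρ, rfl⟩ := h
  rw [sigmaWord_append]
  exact mul_le_of_le_one_right (sigmaWord_pos sys α).le (sigmaWord_le_one sys ρ)

lemma mul_sigmaWord_dropLast_le {r : ℝ} (hr : ∀ i, r ≤ sys.σ i) {α : List ℕ} (hα : α ≠ []) :
    r * sigmaWord sys α.dropLast ≤ sigmaWord sys α := by
  conv_rhs => rw [← List.dropLast_append_getLast hα]
  rw [sigmaWord_append, sigmaWord_cons, mul_comm]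
  simpa [sigmaWord] using mul_le_mul_of_nonneg_left (hr _) (sigmaWord_pos sys α.dropLast).le

lemma mem_wordSet_zero {k : ℕ} {α : List ℕ} : α ∈ wordSet sys k 0 ↔ α = [] := by
  simp [wordSet]

lemma mem_wordSet_succ {k n : ℕ} {α : List ℕ} :
    α ∈ wordSet sys k (n + 1) ↔ ∃ i ∈ sys.I (k + 1), ∃ β ∈ wordSet sys (k + 1) n, α = i :: β := by
  simp [wordSet, eq_comm, and_assoc]

lemma length_of_mem_wordSet {k n : ℕ} {α : List ℕ} (h : α ∈ wordSet sys k n) :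
    α.length = n := by
  induction n generalizing k α with
  | zero => simp [(mem_wordSet_zero sys).1 h]
  | succ n ih =>
    obtain ⟨i, -, β, hβ, rfl⟩ := (mem_wordSet_succ sys).1 h
    simp [ih hβ]

lemma take_mem_wordSet {k n m : ℕ} {α : List ℕ} (h : α ∈ wordSet sys k n) (hm : m ≤ n) :
    α.take m ∈ wordSet sys k m := by
  induction m generalizing k n α with
  | zero => simp [mem_wordSet_zero]
  | succ m ih =>
    obtain ⟨n, rfl⟩ := Nat.exists_eq_add_of_le' (Nat.zero_lt_of_lt hm)
    obtain ⟨i, hi, β, hβ, rfl⟩ := (mem_wordSet_succ sys).1 h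
    exact (mem_wordSet_succ sys).2 ⟨i, hi, β.take m, ih hβ (by omega), rfl⟩

lemma drop_mem_wordSet {k n : ℕ} (m : ℕ) {α : List ℕ} (h : α ∈ wordSet sys k n) :
    α.drop m ∈ wordSet sys (k + m) (n - m) := by
  induction m generalizing k n α with
  | zero => simpa using h
  | succ m ih =>
    cases n with
    | zero => simp [(mem_wordSet_zero sys).1 h, mem_wordSet_zero]
    | succ n =>
      obtain ⟨i, -, β, hβ, rfl⟩ := (mem_wordSet_succ sys).1 h
      simpa [Nat.add_right_comm, ← Nat.add_assoc] using ih hβ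

lemma append_mem_wordSet {k m r : ℕ} {α β : List ℕ} (hα : α ∈ wordSet sys k m)
    (hβ : β ∈ wordSet sys (k + m) r) : α ++ β ∈ wordSet sys k (m + r) := by
  induction m generalizing k α with
  | zero => simpa [(mem_wordSet_zero sys).1 hα] using hβ
  | succ m ih =>
    obtain ⟨i, hi, α', hα', rfl⟩ := (mem_wordSet_succ sys).1 hα
    rw [Nat.add_right_comm]
    exact (mem_wordSet_succ sys).2
      ⟨i, hi, α' ++ β, ih hα' (by rwa [show k + 1 + m = k + (m + 1) by omega]), rfl⟩

lemma sigmaWord_le_pow {c : ℝ} (hc : ∀ k, 1 ≤ k → ∀ i ∈ sys.I k, sys.σ i ≤ c) {k n : ℕ}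
    {α : List ℕ} (hα : α ∈ wordSet sys k n) : sigmaWord sys α ≤ c ^ n := by
  induction n generalizing k α with
  | zero => simp [(mem_wordSet_zero sys).1 hα, sigmaWord]
  | succ n ih =>
    obtain ⟨i, hi, β, hβ, rfl⟩ := (mem_wordSet_succ sys).1 hα
    have hσi := hc (k + 1) (by omega) i hi
    rw [sigmaWord_cons, pow_succ']
    exact mul_le_mul hσi (ih hβ) (sigmaWord_pos sys β).le ((sys.σ_pos i).le.trans hσi)

variable {s : ℝ} (hsum : ∀ k, 1 ≤ k → ∑ i ∈ sys.I k, sys.σ i ^ s = 1)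
include hsum

lemma sum_sigmaWord_rpow_wordSet (k n : ℕ) : ∑ α ∈ wordSet sys k n, sigmaWord sys α ^ s = 1 := by
  induction n generalizing k with
  | zero => simp [wordSet, sigmaWord]
  | succ n ih =>
    rw [wordSet, Finset.sum_image (by simp), Finset.sum_product, ← hsum (k + 1) (by omega)]
    refine Finset.sum_congr rfl fun i _ => ?_
    simp_rw [sigmaWord_cons, Real.mul_rpow (sys.σ_pos i).le (sigmaWord_pos sys _).le,
      ← Finset.mul_sum, ih, mul_one]

lemma sum_sigmaWord_rpow_extensions {k m : ℕ} {α : List ℕ} (hα : α ∈ wordSet sys k m) (r : ℕ) :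
    ∑ γ ∈ (wordSet sys k (m + r)).filter (α <+: ·), sigmaWord sys γ ^ s = sigmaWord sys α ^ s := by
  have hext : (wordSet sys k (m + r)).filter (α <+: ·) =
      (wordSet sys (k + m) r).image (α ++ ·) := by
    ext γ
    simp only [Finset.mem_filter, Finset.mem_image]
    constructor
    · rintro ⟨hγ, hαγ⟩
      refine ⟨γ.drop m, by simpa using drop_mem_wordSet sys m hγ, ?_⟩
      simpa [length_of_mem_wordSet sys hα] using List.prefix_iff_eq_append.1 hαγ
    · rintro ⟨β, hβ, rfl⟩
      exact ⟨append_mem_wordSet sys hα hβ, List.prefix_append α β⟩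
  rw [hext, Finset.sum_image (fun _ _ _ _ => List.append_cancel_left)]
  simp_rw [sigmaWord_append, Real.mul_rpow (sigmaWord_pos sys α).le (sigmaWord_pos sys _).le,
    ← Finset.mul_sum, sum_sigmaWord_rpow_wordSet sys hsum, mul_one]

end Words

section UniformRatio

variable (sys : NAIFS E) {s : ℝ} (hs : 0 < s) (hsum : ∀ k, 1 ≤ k → ∑ i ∈ sys.I k, sys.σ i ^ s = 1)
include hs hsum

lemma exists_ne_mem_I {k i : ℕ} (hk : 1 ≤ k) (hi : i ∈ sys.I k) : ∃ j ∈ sys.I k, j ≠ i := by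
  by_contra! h
  have hsingle : ∑ j ∈ sys.I k, sys.σ j ^ s = sys.σ i ^ s :=
    Finset.sum_eq_single_of_mem i hi fun j hj hji => absurd (h j hj) hji
  exact (Real.rpow_lt_one (sys.σ_pos i).le (sys.σ_lt_one i) hs).ne (hsingle ▸ hsum k hk)

lemma exists_uniform_ratio_lt_one {r : ℝ} (hr0 : 0 < r) (hr : ∀ i, r ≤ sys.σ i) :
    ∃ c, 0 ≤ c ∧ c < 1 ∧ ∀ k, 1 ≤ k → ∀ i ∈ sys.I k, sys.σ i ≤ c := by
  have hrs : 0 < r ^ s := Real.rpow_pos_of_pos hr0 s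
  have hrs1 : r ^ s < 1 := Real.rpow_lt_one hr0.le ((hr 0).trans_lt (sys.σ_lt_one 0)) hs
  refine ⟨(1 - r ^ s) ^ s⁻¹, Real.rpow_nonneg (by linarith) _,
    Real.rpow_lt_one (by linarith) (by linarith) (inv_pos.2 hs), fun k hk i hi => ?_⟩
  obtain ⟨j, hj, hji⟩ := exists_ne_mem_I sys hs hsum hk hi
  have hpair : sys.σ i ^ s + sys.σ j ^ s ≤ 1 :=
    hsum k hk ▸ Finset.add_le_sum (f := fun l => sys.σ l ^ s)
      (fun l _ => Real.rpow_nonneg (sys.σ_pos l).le s) hi hj hji.symm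
  have hrj : r ^ s ≤ sys.σ j ^ s := Real.rpow_le_rpow hr0.le (hr j) hs.le
  rw [Real.le_rpow_inv_iff_of_pos (sys.σ_pos i).le (by linarith) hs]
  linarith

end UniformRatio

section Cut

variable (sys : NAIFS E) {η δ : ℝ} {k : ℕ}

lemma length_le_of_mem_Jset {c : ℝ} (hc : ∀ k, 1 ≤ k → ∀ i ∈ sys.I k, sys.σ i ≤ c)
    (hc0 : 0 ≤ c) (hc1 : c ≤ 1) (hη : 0 ≤ η) {N : ℕ} (hN : c ^ N * η < δ) {α : List ℕ}
    (hα : α ∈ Jset sys η k δ) : α.length ≤ N := by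
  obtain ⟨⟨n, -, hαn⟩, -, hδ⟩ := hα
  have hlen := length_of_mem_wordSet sys hαn
  have hdrop : α.dropLast ∈ wordSet sys k (n - 1) := by
    rw [List.dropLast_eq_take, hlen]
    exact take_mem_wordSet sys hαn (Nat.sub_le n 1)
  by_contra! hNn
  have hpow : c ^ (n - 1) ≤ c ^ N := pow_le_pow_of_le_one hc0 hc1 (by omega)
  have := mul_le_mul_of_nonneg_right ((sigmaWord_le_pow sys hc hdrop).trans hpow) hη
  linarith

lemma Jset_finite_of_length_le {N : ℕ} (hlen : ∀ α ∈ Jset sys η k δ, α.length ≤ N) :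
    (Jset sys η k δ).Finite :=
  ((Finset.range (N + 1)).biUnion (wordSet sys k)).finite_toSet.subset fun α hα => by
    obtain ⟨n, -, hαn⟩ := hα.1
    have := hlen α hα
    rw [length_of_mem_wordSet sys hαn] at this
    exact Finset.mem_coe.2 (Finset.mem_biUnion.2 ⟨n, Finset.mem_range.2 (by omega), hαn⟩)

lemma eq_of_prefix_of_mem_Jset (hη : 0 ≤ η) {α β : List ℕ} (hα : α ∈ Jset sys η k δ)
    (hβ : β ∈ Jset sys η k δ) (h : α <+: β) : α = β := by
  by_contra hne
  have hlt : α.length < β.length := lt_of_le_of_ne h.length_le fun hl => hne (h.eq_of_length hl)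
  have hαβ' : α <+: β.dropLast := by
    rw [List.dropLast_eq_take]
    exact List.prefix_take_iff.2 ⟨h, by omega⟩
  have := mul_le_mul_of_nonneg_right (sigmaWord_le_of_prefix sys hαβ') hη
  linarith [hα.2.1, hβ.2.2]

lemma exists_prefix_mem_Jset (hδη : δ ≤ η) {N : ℕ} {γ : List ℕ} (hγ : γ ∈ wordSet sys k N)
    (hγδ : sigmaWord sys γ * η < δ) : ∃ α ∈ Jset sys η k δ, α <+: γ := by
  have hlen := length_of_mem_wordSet sys hγ
  -- the shortest prefix `α` of `γ` with `σ_α η < δ` works; it is nonempty because `δ ≤ η`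
  have hex : ∃ m, sigmaWord sys (γ.take m) * η < δ := ⟨N, by rwa [← hlen, List.take_length]⟩
  have hmN : Nat.find hex ≤ N := Nat.find_min' hex (by rwa [← hlen, List.take_length])
  have hm0 : Nat.find hex ≠ 0 := fun h0 => by
    have := h0 ▸ Nat.find_spec hex
    simp only [List.take_zero, sigmaWord, List.map_nil, List.prod_nil, one_mul] at this
    linarith
  refine ⟨γ.take (Nat.find hex), ⟨⟨Nat.find hex, by omega, take_mem_wordSet sys hγ hmN⟩,
    Nat.find_spec hex, ?_⟩, List.take_prefix _ γ⟩
  have hprev := not_lt.1 (Nat.find_min hex (by omega : Nat.find hex - 1 < Nat.find hex))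
  simpa [List.dropLast_eq_take, List.take_take, hlen, hmN] using hprev

variable {s : ℝ}

lemma sum_sigmaWord_rpow_Jset (hsum : ∀ k, 1 ≤ k → ∑ i ∈ sys.I k, sys.σ i ^ s = 1)
    (hη : 0 ≤ η) (hδη : δ ≤ η) (hfin : (Jset sys η k δ).Finite) {N : ℕ}
    (hlen : ∀ α ∈ Jset sys η k δ, α.length ≤ N)
    (hdeep : ∀ γ ∈ wordSet sys k N, sigmaWord sys γ * η < δ) :
    ∑ α ∈ hfin.toFinset, sigmaWord sys α ^ s = 1 := by
  set D := fun α => (wordSet sys k N).filter (α <+: ·)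
  have hdisj : (hfin.toFinset : Set (List ℕ)).PairwiseDisjoint D := by
    intro α hα β hβ hne
    simp only [Set.Finite.coe_toFinset] at hα hβ
    refine Finset.disjoint_left.2 fun γ hγα hγβ => hne ?_
    simp only [D, Finset.mem_filter] at hγα hγβ
    rcases List.prefix_or_prefix_of_prefix hγα.2 hγβ.2 with h | h
    · exact eq_of_prefix_of_mem_Jset sys hη hα hβ h
    · exact (eq_of_prefix_of_mem_Jset sys hη hβ hα h).symm
  have hcover : hfin.toFinset.biUnion D = wordSet sys k N := by
    ext γ
    simp only [Finset.mem_biUnion, Set.Finite.mem_toFinset, D, Finset.mem_filter]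
    refine ⟨fun ⟨_, _, hγ, _⟩ => hγ, fun hγ => ?_⟩
    obtain ⟨α, hα, hαγ⟩ := exists_prefix_mem_Jset sys hδη hγ (hdeep γ hγ)
    exact ⟨α, hα, hγ, hαγ⟩
  calc ∑ α ∈ hfin.toFinset, sigmaWord sys α ^ s
      = ∑ α ∈ hfin.toFinset, ∑ γ ∈ D α, sigmaWord sys γ ^ s := by
        refine Finset.sum_congr rfl fun α hα => ?_
        obtain ⟨⟨n, -, hαn⟩, -⟩ := hfin.mem_toFinset.1 hα
        have hnN : n ≤ N := length_of_mem_wordSet sys hαn ▸ hlen α (hfin.mem_toFinset.1 hα)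
        rw [← sum_sigmaWord_rpow_extensions sys hsum hαn (N - n), Nat.add_sub_cancel' hnN]
    _ = ∑ γ ∈ wordSet sys k N, sigmaWord sys γ ^ s := by rw [← Finset.sum_biUnion hdisj, hcover]
    _ = 1 := sum_sigmaWord_rpow_wordSet sys hsum k N

lemma mul_le_sigmaWord_mul_of_mem_Jset {r : ℝ} (hr0 : 0 ≤ r) (hr : ∀ i, r ≤ sys.σ i)
    (hη : 0 ≤ η) {α : List ℕ} (hα : α ∈ Jset sys η k δ) : r * δ ≤ sigmaWord sys α * η := by
  obtain ⟨⟨n, hn, hαn⟩, -, hδ⟩ := hα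
  have hne : α ≠ [] :=
    List.ne_nil_of_length_pos (by rw [length_of_mem_wordSet sys hαn]; omega)
  calc r * δ ≤ r * sigmaWord sys α.dropLast * η := by
        rw [mul_assoc]; exact mul_le_mul_of_nonneg_left hδ hr0
    _ ≤ sigmaWord sys α * η :=
        mul_le_mul_of_nonneg_right (mul_sigmaWord_dropLast_le sys hr hne) hη

lemma card_mul_rpow_le_and_le_card_mul_rpow {r : ℝ} (hs : 0 ≤ s) (hr0 : 0 ≤ r)
    (hr : ∀ i, r ≤ sys.σ i) (hη : 0 ≤ η) (hfin : (Jset sys η k δ).Finite)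
    (hsum1 : ∑ α ∈ hfin.toFinset, sigmaWord sys α ^ s = 1) :
    hfin.toFinset.card * (r * δ) ^ s ≤ η ^ s ∧ η ^ s ≤ hfin.toFinset.card * δ ^ s := by
  have hηs : η ^ s = ∑ α ∈ hfin.toFinset, (sigmaWord sys α * η) ^ s := by
    simp_rw [Real.mul_rpow (sigmaWord_pos sys _).le hη, ← Finset.sum_mul, hsum1, one_mul]
  rw [hηs, ← nsmul_eq_mul, ← nsmul_eq_mul]
  refine ⟨Finset.card_nsmul_le_sum _ _ _ fun α hα => ?_, Finset.sum_le_card_nsmul _ _ _ fun α hα => ?_⟩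
  · have hα := hfin.mem_toFinset.1 hα
    have hrδ : 0 ≤ r * δ :=
      mul_nonneg hr0 (by linarith [mul_nonneg (sigmaWord_pos sys α).le hη, hα.2.1])
    exact Real.rpow_le_rpow hrδ (mul_le_sigmaWord_mul_of_mem_Jset sys hr0 hr hη hα) hs
  · exact Real.rpow_le_rpow (mul_nonneg (sigmaWord_pos sys α).le hη)
      (hfin.mem_toFinset.1 hα).2.1.le hs

end Cut

theorem card_J_delta_bounds_general {d : ℕ}
    (sys : NAIFS (EuclideanSpace ℝ (Fin d)))
    (σstar : ℝ) (hσstar : σstar = sInf (Set.range sys.σ)) (hσpos : 0 < σstar)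
    (s : ℝ) (hs : 0 < s)
    (hsum : ∀ k, 1 ≤ k → ∑ i ∈ sys.I k, sys.σ i ^ s = 1)
    (η : ℝ) :
    ∃ κ₁ κ₂ : ℝ, 0 < κ₁ ∧ 0 < κ₂ ∧
      ∀ (k : ℕ) (δ : ℝ), 0 < δ → δ ≤ η →
        (Jset sys η k δ).Finite ∧
        κ₁ * δ ^ (-s) ≤ ((Jset sys η k δ).ncard : ℝ) ∧
        ((Jset sys η k δ).ncard : ℝ) ≤ κ₂ * δ ^ (-s) := by
  rcases le_or_gt η 0 with hη | hη
  · exact ⟨1, 1, one_pos, one_pos, fun k δ hδ hδη => absurd (hδ.trans_le hδη) hη.not_gt⟩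
  have hσ : ∀ i, σstar ≤ sys.σ i := fun i =>
    hσstar ▸ csInf_le ⟨0, by rintro _ ⟨j, rfl⟩; exact (sys.σ_pos j).le⟩ ⟨i, rfl⟩
  obtain ⟨c, hc0, hc1, hc⟩ := exists_uniform_ratio_lt_one sys hs hsum hσpos hσ
  refine ⟨η ^ s, η ^ s * σstar ^ (-s), by positivity, by positivity, fun k δ hδ hδη => ?_⟩
  obtain ⟨N, hN⟩ := exists_pow_lt_of_lt_one (div_pos hδ hη) hc1
  rw [lt_div_iff₀ hη] at hN
  have hlen : ∀ α ∈ Jset sys η k δ, α.length ≤ N := fun _ =>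
    length_le_of_mem_Jset sys hc hc0 hc1.le hη.le hN
  have hfin := Jset_finite_of_length_le sys hlen
  have hsum1 := sum_sigmaWord_rpow_Jset sys hsum hη.le hδη hfin hlen fun γ hγ =>
    (mul_le_mul_of_nonneg_right (sigmaWord_le_pow sys hc hγ) hη.le).trans_lt hN
  obtain ⟨hupper, hlower⟩ :=
    card_mul_rpow_le_and_le_card_mul_rpow sys hs.le hσpos.le hσ hη.le hfin hsum1
  refine ⟨hfin, ?_, ?_⟩ <;> rw [Set.ncard_eq_toFinset_card _ hfin, Real.rpow_neg hδ.le]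
  · rwa [← div_eq_mul_inv, div_le_iff₀ (by positivity)]
  · rwa [Real.rpow_neg hσpos.le, mul_assoc, ← mul_inv, ← Real.mul_rpow hσpos.le hδ.le,
      ← div_eq_mul_inv, le_div_iff₀ (by positivity)]

/-- For the pullback attractor of a non-autonomous IFS of
similarities satisfying the generalised Moran open-set condition, with
`inf{σ_i} = σ* > 0` and `∑_{i∈I_k} σ_i^s = 1` for all `k`, there are constants
`κ₁, κ₂ > 0`, independent of `k` and `δ`, with
`κ₁ δ^{-s} ≤ card(J^k_δ) ≤ κ₂ δ^{-s}` for all `k ∈ ℕ₀` and `0 < δ ≤ η`. -/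
theorem card_J_delta_bounds {d : ℕ}
    (sys : NAIFS (EuclideanSpace ℝ (Fin d)))
    (hsim : ∀ i x y, dist (sys.f i x) (sys.f i y) = sys.σ i * dist x y)
    (U : ℕ → Set (EuclideanSpace ℝ (Fin d))) (ε₀ : ℝ)
    (hosc : GenMoranOSC sys U ε₀)
    (σstar : ℝ) (hσstar : σstar = sInf (Set.range sys.σ)) (hσpos : 0 < σstar)
    (s : ℝ) (hs : 0 < s)
    (hsum : ∀ k, 1 ≤ k → ∑ i ∈ sys.I k, sys.σ i ^ s = 1)
    (F : ℕ → Set (EuclideanSpace ℝ (Fin d)))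
    (hF : IsPullbackAttractor sys F)
    (η : ℝ) (hη : η = ⨆ k, diam (closure (U k))) :
    ∃ κ₁ κ₂ : ℝ, 0 < κ₁ ∧ 0 < κ₂ ∧
      ∀ (k : ℕ) (δ : ℝ), 0 < δ → δ ≤ η →
        (Jset sys η k δ).Finite ∧
        κ₁ * δ ^ (-s) ≤ ((Jset sys η k δ).ncard : ℝ) ∧
        ((Jset sys η k δ).ncard : ℝ) ≤ κ₂ * δ ^ (-s) :=
  card_J_delta_bounds_general sys σstar hσstar hσpos s hs hsum η
end
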